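/- arXiv:2304.10549 — 2 statements merged into one kernel-verified Lean document; each statement's English description precedes it below -/
import Mathlib

section
/- A finite set Q = {p₁,…,p_k} of partial orders (k ≥ 2) is a ufg set if and only if there exist attributes m₁,…,m_k ∈ M_≤ ∪ M_≰ and a partial order q such that: (1) q ∈ γ(Q), (2) for all i,j, p_i I m_j if and only if i ≠ j, and (3) for all i, ¬(q I m_i). -/
/-- A partial order on `X`, viewed as a set of pairs. -/
def IsPosetRel {X : Type} (p : Set (X × X)) : Prop :=
  (∀ y : X, (y, y) ∈ p) ∧
  (∀ y₁ y₂ y₃ : X, (y₁, y₂) ∈ p → (y₂, y₃) ∈ p → (y₁, y₃) ∈ p) ∧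
  (∀ y₁ y₂ : X, (y₁, y₂) ∈ p → y₁ ≠ y₂ → (y₂, y₁) ∉ p)

/-- The set `𝒫` of all partial orders on `X`. -/
def Poset (X : Type) := {p : Set (X × X) // IsPosetRel p}

/-- The closure operator `γ(S) = {p ∈ 𝒫 | ⋂S ⊆ p ⊆ ⋃S}`. -/
def gamPO {X : Type} (S : Set (Poset X)) : Set (Poset X) :=
  {p | (⋂ s ∈ S, s.val) ⊆ p.val ∧ p.val ⊆ ⋃ s ∈ S, s.val}

/-- Condition (C1): `S ⊊ γ(S)`. -/
def C1 {X : Type} (S : Set (Poset X)) : Prop := S ⊂ gamPO S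

/-- Condition (C2): no family of proper subsets of `S` has closures unioning to `γ(S)`. -/
def C2 {X : Type} (S : Set (Poset X)) : Prop :=
  ¬ ∃ (ι : Type) (A : ι → Set (Poset X)),
      (∀ i : ι, A i ⊂ S) ∧ (⋃ i : ι, gamPO (A i)) = gamPO S

/-- A union-free generic (ufg) set. -/
def IsUfg {X : Type} (S : Set (Poset X)) : Prop := C1 S ∧ C2 S

/-- Attributes: `(true, (i,j))` is the attribute "xᵢ ≤ xⱼ", `(false, (i,j))` is "xᵢ ≰ xⱼ",
for `i ≠ j`. -/
def Attr (X : Type) := Bool × {ij : X × X // ij.1 ≠ ij.2}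

/-- The incidence relation of the formal context of partial orders. -/
def Inc {X : Type} (p : Poset X) (m : Attr X) : Prop :=
  if m.1 then m.2.val ∈ p.val else m.2.val ∉ p.val

def Phi {G M : Type} (I : G → M → Prop) (B : Set M) : Set G := {g | ∀ m ∈ B, I g m}

def Psi {G M : Type} (I : G → M → Prop) (A : Set G) : Set M := {m | ∀ g ∈ A, I g m}

def gam {G M : Type} (I : G → M → Prop) (A : Set G) : Set G := Phi I (Psi I A)

/-!
Off the diagonal, `⋂S ⊆ q` says that `q` has every attribute "xᵢ ≤ xⱼ" shared by all of `S`,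
and `q ⊆ ⋃S` that it has every shared attribute "xᵢ ≰ xⱼ"; so for nonempty `S` the closure `γ`
is the closure `gam Inc` of the formal context. A set `Q` satisfies (C2) exactly when some
`q ∈ γ(Q)` lies outside `γ(A)` for every `A ⊊ Q`, and for `Q = {p₁, …, p_k}` it suffices to take
`A = Q \ {p_j}`. Leaving `γ(Q \ {p_j})` means failing an attribute `m_j` shared by all `p_i`
with `i ≠ j`, and `m_j` must fail at `p_j` because `q ∈ γ(Q)`. Conversely such attributes
keep `q` out of each `γ(A)`, and out of `Q` itself since `k ≥ 2`.
-/

theorem mem_gam_iff {G M : Type} {I : G → M → Prop} {A : Set G} {g : G} :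
    g ∈ gam I A ↔ ∀ m, (∀ a ∈ A, I a m) → I g m :=
  Iff.rfl

theorem Poset.mem_of_fst_eq_snd {X : Type} (p : Poset X) {e : X × X} (h : e.1 = e.2) :
    e ∈ p.val := by
  obtain ⟨a, b⟩ := e
  obtain rfl : a = b := h
  exact p.2.1 a

theorem subset_gamPO {X : Type} (S : Set (Poset X)) : S ⊆ gamPO S :=
  fun _ hs => ⟨Set.biInter_subset_of_mem hs, Set.subset_biUnion_of_mem (u := fun s => s.val) hs⟩

theorem gamPO_mono {X : Type} {S T : Set (Poset X)} (h : S ⊆ T) : gamPO S ⊆ gamPO T :=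
  fun _ hr => ⟨(Set.biInter_subset_biInter_left h).trans hr.1,
    hr.2.trans (Set.biUnion_subset_biUnion_left h)⟩

theorem gamPO_subset_gam {X : Type} (S : Set (Poset X)) : gamPO S ⊆ gam Inc S := by
  rintro q ⟨hinter, hunion⟩
  rw [mem_gam_iff]
  rintro ⟨_ | _, e⟩ hm
  · intro he
    obtain ⟨s, hs, hes⟩ := Set.mem_iUnion₂.1 (hunion he)
    exact hm s hs hes
  · exact hinter (Set.mem_iInter₂.2 hm)

theorem gam_subset_gamPO {X : Type} {S : Set (Poset X)} (hS : S.Nonempty) :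
    gam Inc S ⊆ gamPO S := by
  intro q hq
  rw [mem_gam_iff] at hq
  constructor
  · intro e he
    by_cases h : e.1 = e.2
    · exact q.mem_of_fst_eq_snd h
    · exact hq (true, ⟨e, h⟩) (Set.mem_iInter₂.1 he)
  · intro e he
    by_cases h : e.1 = e.2
    · obtain ⟨s, hs⟩ := hS
      exact Set.mem_iUnion₂.2 ⟨s, hs, s.mem_of_fst_eq_snd h⟩
    · by_contra hout
      exact hq (false, ⟨e, h⟩) (fun s hs hes => hout (Set.mem_iUnion₂.2 ⟨s, hs, hes⟩)) he

theorem C2_iff {X : Type} {S : Set (Poset X)} :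
    C2 S ↔ ∃ q ∈ gamPO S, ∀ A ⊂ S, q ∉ gamPO A := by
  constructor
  · intro hS
    by_contra! h
    refine hS ⟨{A // A ⊂ S}, Subtype.val, fun A => A.2, ?_⟩
    refine (Set.iUnion_subset fun A => gamPO_mono A.2.1).antisymm fun q hq => ?_
    obtain ⟨A, hA, hqA⟩ := h q hq
    exact Set.mem_iUnion.2 ⟨⟨A, hA⟩, hqA⟩
  · rintro ⟨q, hq, hqA⟩ ⟨ι, A, hA, hU⟩
    obtain ⟨i, hqi⟩ := Set.mem_iUnion.1 (hU ▸ hq : q ∈ ⋃ i, gamPO (A i))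
    exact hqA (A i) (hA i) hqi

theorem exists_attr_of_notMem_gamPO_diff {X : Type} {Q : Set (Poset X)} {s q : Poset X}
    (hne : (Q \ {s}).Nonempty) (hq : q ∈ gamPO Q) (hqs : q ∉ gamPO (Q \ {s})) :
    ∃ m, (∀ r ∈ Q, Inc r m ↔ r ≠ s) ∧ ¬ Inc q m := by
  have hqs' : q ∉ gam Inc (Q \ {s}) := fun h => hqs (gam_subset_gamPO hne h)
  rw [mem_gam_iff] at hqs'
  push Not at hqs'
  obtain ⟨m, hm, hqm⟩ := hqs'
  refine ⟨m, fun r hr => ⟨?_, fun hrs => hm r ⟨hr, hrs⟩⟩, hqm⟩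
  rintro hrm rfl
  refine hqm (mem_gam_iff.1 (gamPO_subset_gam Q hq) m fun t ht => ?_)
  by_cases hts : t = r
  · exact hts ▸ hrm
  · exact hm t ⟨ht, hts⟩

theorem notMem_gamPO_of_forall_inc {X : Type} {A : Set (Poset X)} {q : Poset X} {m : Attr X}
    (hA : ∀ a ∈ A, Inc a m) (hq : ¬ Inc q m) : q ∉ gamPO A :=
  fun h => hq (mem_gam_iff.1 (gamPO_subset_gam A h) m hA)

theorem ufg_iff_attrs_general {X : Type} (k : ℕ) (hk : 2 ≤ k)
    (p : Fin k → Poset X) (hinj : Function.Injective p) :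
    IsUfg (Set.range p) ↔
      ∃ (m : Fin k → Attr X) (q : Poset X),
        q ∈ gamPO (Set.range p) ∧
        (∀ i j : Fin k, Inc (p i) (m j) ↔ i ≠ j) ∧
        (∀ i : Fin k, ¬ Inc q (m i)) := by
  have hother (j : Fin k) : ∃ i, i ≠ j :=
    Fintype.exists_ne_of_one_lt_card (by rw [Fintype.card_fin]; omega) j
  rw [IsUfg, C2_iff]
  constructor
  · rintro ⟨-, q, hq, hqA⟩
    have hsep (j : Fin k) : ∃ m, (∀ i, Inc (p i) m ↔ i ≠ j) ∧ ¬ Inc q m := by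
      obtain ⟨i, hij⟩ := hother j
      obtain ⟨m, hm, hqm⟩ := exists_attr_of_notMem_gamPO_diff (Q := Set.range p) (s := p j)
        ⟨p i, ⟨i, rfl⟩, hinj.ne hij⟩ hq
        (hqA _ (Set.sdiff_singleton_ssubset.2 ⟨j, rfl⟩))
      exact ⟨m, fun i => (hm (p i) ⟨i, rfl⟩).trans hinj.ne_iff, hqm⟩
    choose m hm hqm using hsep
    exact ⟨m, q, hq, fun i j => hm j i, hqm⟩
  · rintro ⟨m, q, hq, hpm, hqm⟩
    refine ⟨⟨subset_gamPO _, fun h => ?_⟩, q, hq, fun A hA => ?_⟩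
    · obtain ⟨i, rfl⟩ := h hq
      obtain ⟨j, hji⟩ := hother i
      exact hqm j ((hpm i j).2 hji.symm)
    · obtain ⟨_, ⟨j, rfl⟩, hjA⟩ := Set.exists_of_ssubset hA
      refine notMem_gamPO_of_forall_inc (fun a ha => ?_) (hqm j)
      obtain ⟨l, rfl⟩ := hA.1 ha
      exact (hpm l j).2 fun hlj => hjA (hlj ▸ ha)

theorem ufg_iff_attrs {X : Type} [Fintype X] (k : ℕ) (hk : 2 ≤ k)
    (p : Fin k → Poset X) (hinj : Function.Injective p) :
    IsUfg (Set.range p) ↔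
      ∃ (m : Fin k → Attr X) (q : Poset X),
        q ∈ gamPO (Set.range p) ∧
        (∀ i j : Fin k, Inc (p i) (m j) ↔ i ≠ j) ∧
        (∀ i : Fin k, ¬ Inc q (m i)) :=
  ufg_iff_attrs_general k hk p hinj
end

section
/- Counterexample to the connectedness theorem: Let X = {a, b, a₁, b₁, c₁} and consider the strict-part relations p₁ = {(a,b),(a₁,c₁)}, p₂ = {(a₁,b₁)}, p₃ = {(b₁,c₁)} (each extended reflexively to a partial order on X). Then Q = {p₁,p₂,p₃} is a ufg set, witnessed by q = {(a,b),(a₁,b₁),(b₁,c₁),(a₁,c₁)}: q ∈ γ(Q) \ Q and q ∉ γ(Q \ {p_i}) for each i ∈ {1,2,3}. -/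
/-- `a = 0`, `b = 1`, `a₁ = 2`, `b₁ = 3`, `c₁ = 4` in `Fin 5`. -/
def p1val : Set (Fin 5 × Fin 5) := {z | z.1 = z.2 ∨ z = (0, 1) ∨ z = (2, 4)}

def p2val : Set (Fin 5 × Fin 5) := {z | z.1 = z.2 ∨ z = (2, 3)}

def p3val : Set (Fin 5 × Fin 5) := {z | z.1 = z.2 ∨ z = (3, 4)}

def qval : Set (Fin 5 × Fin 5) :=
  {z | z.1 = z.2 ∨ z = (0, 1) ∨ z = (2, 3) ∨ z = (3, 4) ∨ z = (2, 4)}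

def P1 : Poset (Fin 5) := ⟨p1val, by simp only [IsPosetRel, p1val, Set.mem_setOf_eq]; refine ⟨?_, ?_, ?_⟩ <;> decide⟩
def P2 : Poset (Fin 5) := ⟨p2val, by simp only [IsPosetRel, p2val, Set.mem_setOf_eq]; refine ⟨?_, ?_, ?_⟩ <;> decide⟩
def P3 : Poset (Fin 5) := ⟨p3val, by simp only [IsPosetRel, p3val, Set.mem_setOf_eq]; refine ⟨?_, ?_, ?_⟩ <;> decide⟩
def Qw : Poset (Fin 5) := ⟨qval, by simp only [IsPosetRel, qval, Set.mem_setOf_eq]; refine ⟨?_, ?_, ?_⟩ <;> decide⟩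

lemma gam_mono {X : Type} {A B : Set (Poset X)} (h : A ⊆ B) : gamPO A ⊆ gamPO B :=
  fun _ hp => ⟨(Set.biInter_subset_biInter_left h).trans hp.1,
    hp.2.trans (Set.biUnion_subset_biUnion_left h)⟩

lemma Qw_mem : Qw ∈ gamPO ({P1, P2, P3} : Set (Poset (Fin 5))) := by
  constructor
  · intro z hz
    simp only [Set.mem_iInter] at hz
    have h1 := hz P1 (by simp)
    have h2 := hz P2 (by simp)
    show z ∈ qval
    simp only [P1, P2, p1val, p2val, qval, Set.mem_setOf_eq] at h1 h2 ⊢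
    tauto
  · intro z hz
    have hz' : z ∈ qval := hz
    have h : z ∈ p1val ∨ z ∈ p2val ∨ z ∈ p3val := by
      simp only [p1val, p2val, p3val, qval, Set.mem_setOf_eq] at hz' ⊢
      tauto
    rcases h with h | h | h
    · exact Set.mem_biUnion (show P1 ∈ ({P1,P2,P3}:Set (Poset (Fin 5))) by simp) (show z ∈ P1.val from h)
    · exact Set.mem_biUnion (show P2 ∈ ({P1,P2,P3}:Set (Poset (Fin 5))) by simp) (show z ∈ P2.val from h)
    · exact Set.mem_biUnion (show P3 ∈ ({P1,P2,P3}:Set (Poset (Fin 5))) by simp) (show z ∈ P3.val from h)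

lemma Qw_ne1 : Qw ≠ P1 := by
  intro h
  have hval : qval = p1val := congrArg Subtype.val h
  have : ((2:Fin 5),(3:Fin 5)) ∈ p1val := hval ▸ (by simp [qval] : ((2:Fin 5),(3:Fin 5)) ∈ qval)
  simp [p1val] at this
lemma Qw_ne2 : Qw ≠ P2 := by
  intro h
  have hval : qval = p2val := congrArg Subtype.val h
  have : ((0:Fin 5),(1:Fin 5)) ∈ p2val := hval ▸ (by simp [qval] : ((0:Fin 5),(1:Fin 5)) ∈ qval)
  simp [p2val] at this
lemma Qw_ne3 : Qw ≠ P3 := by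
  intro h
  have hval : qval = p3val := congrArg Subtype.val h
  have : ((0:Fin 5),(1:Fin 5)) ∈ p3val := hval ▸ (by simp [qval] : ((0:Fin 5),(1:Fin 5)) ∈ qval)
  simp [p3val] at this

lemma Qw_not_mem : Qw ∉ ({P1, P2, P3} : Set (Poset (Fin 5))) := by
  simp only [Set.mem_insert_iff, Set.mem_singleton_iff]
  push_neg
  exact ⟨Qw_ne1, Qw_ne2, Qw_ne3⟩

lemma not_gam1 : Qw ∉ gamPO (({P1, P2, P3} : Set (Poset (Fin 5))) \ {P1}) := by
  intro h
  have hb := h.2 (show ((0:Fin 5),(1:Fin 5)) ∈ qval by simp [qval])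
  simp only [Set.mem_iUnion, Set.mem_diff, Set.mem_singleton_iff, Set.mem_insert_iff,
    exists_prop] at hb
  obtain ⟨s, ⟨hs, hne⟩, hmem⟩ := hb
  rcases hs with rfl | rfl | rfl
  · exact hne rfl
  · exact absurd (show ((0:Fin 5),(1:Fin 5)) ∈ p2val from hmem) (by simp [p2val])
  · exact absurd (show ((0:Fin 5),(1:Fin 5)) ∈ p3val from hmem) (by simp [p3val])

lemma not_gam2 : Qw ∉ gamPO (({P1, P2, P3} : Set (Poset (Fin 5))) \ {P2}) := by
  intro h
  have hb := h.2 (show ((2:Fin 5),(3:Fin 5)) ∈ qval by simp [qval])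
  simp only [Set.mem_iUnion, Set.mem_diff, Set.mem_singleton_iff, Set.mem_insert_iff,
    exists_prop] at hb
  obtain ⟨s, ⟨hs, hne⟩, hmem⟩ := hb
  rcases hs with rfl | rfl | rfl
  · exact absurd (show ((2:Fin 5),(3:Fin 5)) ∈ p1val from hmem) (by simp [p1val])
  · exact hne rfl
  · exact absurd (show ((2:Fin 5),(3:Fin 5)) ∈ p3val from hmem) (by simp [p3val])

lemma not_gam3 : Qw ∉ gamPO (({P1, P2, P3} : Set (Poset (Fin 5))) \ {P3}) := by
  intro h
  have hb := h.2 (show ((3:Fin 5),(4:Fin 5)) ∈ qval by simp [qval])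
  simp only [Set.mem_iUnion, Set.mem_diff, Set.mem_singleton_iff, Set.mem_insert_iff,
    exists_prop] at hb
  obtain ⟨s, ⟨hs, hne⟩, hmem⟩ := hb
  rcases hs with rfl | rfl | rfl
  · exact absurd (show ((3:Fin 5),(4:Fin 5)) ∈ p1val from hmem) (by simp [p1val])
  · exact absurd (show ((3:Fin 5),(4:Fin 5)) ∈ p2val from hmem) (by simp [p2val])
  · exact hne rfl

lemma not_gam : ∀ x ∈ ({P1, P2, P3} : Set (Poset (Fin 5))),
    Qw ∉ gamPO (({P1, P2, P3} : Set (Poset (Fin 5))) \ {x}) := by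
  intro x hx
  rcases hx with rfl | rfl | rfl
  · exact not_gam1
  · exact not_gam2
  · exact not_gam3

theorem counterexample_is_ufg :
    Qw ∈ gamPO {P1, P2, P3} \ ({P1, P2, P3} : Set (Poset (Fin 5))) ∧
    (∀ x ∈ ({P1, P2, P3} : Set (Poset (Fin 5))),
        Qw ∉ gamPO (({P1, P2, P3} : Set (Poset (Fin 5))) \ {x})) ∧
    IsUfg ({P1, P2, P3} : Set (Poset (Fin 5))) := by
  refine ⟨⟨Qw_mem, Qw_not_mem⟩, not_gam, ?_, ?_⟩
  · -- C1
    have hsub : ({P1, P2, P3} : Set (Poset (Fin 5))) ⊆ gamPO {P1, P2, P3} :=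
      fun p hp => ⟨Set.biInter_subset_of_mem hp, Set.subset_biUnion_of_mem hp⟩
    exact (Set.ssubset_iff_of_subset hsub).2 ⟨Qw, Qw_mem, Qw_not_mem⟩
  · -- C2
    rintro ⟨ι, A, hA, hU⟩
    have : Qw ∈ ⋃ i, gamPO (A i) := hU ▸ Qw_mem
    obtain ⟨i, hi⟩ := Set.mem_iUnion.1 this
    obtain ⟨x, hxS, hxA⟩ := Set.exists_of_ssubset (hA i)
    have hsub : A i ⊆ ({P1, P2, P3} : Set (Poset (Fin 5))) \ {x} :=
      fun y hy => ⟨(hA i).1 hy, fun he => hxA (he ▸ hy)⟩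
    exact not_gam x hxS (gam_mono hsub hi)
end
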